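/- Let V be a nonzero finite-dimensional complex inner product space and let ρ : su(2) → End(V) be a homomorphism of real Lie algebras such that ρ(X) is skew-adjoint for every X ∈ su(2). Then the trace of exp(i·ρ(E)), where E = ĕ₁ + ĕ₂ + ĕ₃, is a real number and satisfies Tr exp(i·ρ(E)) ≥ 1. -/

import Mathlib

/-!
`H := i·ρ(E)` is self-adjoint, and it is traceless because each `ρ(ĕⱼ)` is a commutator.
Diagonalizing `H` in an orthonormal eigenbasis with real eigenvalues `μⱼ` summing to `0`,
`Tr exp H = ∑ exp μⱼ ≥ ∑ (1 + μⱼ) = dim V ≥ 1`.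
-/

section
variable {𝕂 E : Type*} [RCLike 𝕂] [NormedAddCommGroup E] [NormedSpace 𝕂 E]
  [CompleteSpace E]

theorem ContinuousLinearMap.exp_apply_of_apply_eq_smul (A : E →L[𝕂] E) {x : E} {μ : 𝕂}
    (h : A x = μ • x) : NormedSpace.exp A x = NormedSpace.exp μ • x := by
  have hpow : ∀ n : ℕ, (A ^ n) x = μ ^ n • x := fun n => by
    induction n with
    | zero => simp
    | succ n ih => rw [pow_succ, mul_apply_eq_comp, h, map_smul, ih, smul_smul, ← pow_succ']
  have hA := (NormedSpace.exp_series_hasSum_exp' (𝕂 := 𝕂) A).mapL (apply 𝕂 E x)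
  have hμ := (NormedSpace.exp_series_hasSum_exp' (𝕂 := 𝕂) μ).smul_const x
  simp only [apply_apply, smul_apply, hpow, smul_smul] at hA
  simp only [smul_eq_mul] at hμ
  exact hA.unique hμ
end

theorem ContinuousLinearMap.trace_eq_zero_of_commutator_eq {R M : Type*} [CommRing R]
    [TopologicalSpace M] [AddCommGroup M] [Module R M] [IsTopologicalAddGroup M]
    {A B C : M →L[R] M} (h : A * B - B * A = C) : LinearMap.trace R M C = 0 := by
  rw [← h, ContinuousLinearMap.toLinearMap_sub, ContinuousLinearMap.toLinearMap_mul,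
    ContinuousLinearMap.toLinearMap_mul, ← Ring.lie_def, LinearMap.trace_lie]

section
variable {E : Type*} [NormedAddCommGroup E] [InnerProductSpace ℂ E]
  [FiniteDimensional ℂ E] {n : ℕ} (hn : Module.finrank ℂ E = n)

theorem IsSelfAdjoint.trace_exp_eq_sum_exp_eigenvalues {H : E →L[ℂ] E} (hH : IsSelfAdjoint H) :
    LinearMap.trace ℂ E (NormedSpace.exp H : E →L[ℂ] E)
      = ∑ i, (Real.exp (hH.isSymmetric.eigenvalues hn i) : ℂ) := by
  set b := hH.isSymmetric.eigenvectorBasis hn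
  rw [LinearMap.trace_eq_sum_inner _ b]
  refine Fintype.sum_congr _ _ fun i => ?_
  have hexp := H.exp_apply_of_apply_eq_smul (hH.isSymmetric.apply_eigenvectorBasis hn i)
  rw [ContinuousLinearMap.coe_coe, hexp, inner_smul_right, inner_self_eq_norm_sq_to_K,
    b.norm_eq_one]
  simp [Complex.ofReal_exp, Complex.exp_eq_exp_ℂ]

theorem IsSelfAdjoint.exists_trace_exp_eq_ofReal_ge_finrank {H : E →L[ℂ] E}
    (hH : IsSelfAdjoint H) (htr : LinearMap.trace ℂ E H = 0) :
    ∃ r : ℝ, Module.finrank ℂ E ≤ r ∧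
      LinearMap.trace ℂ E (NormedSpace.exp H : E →L[ℂ] E) = r := by
  set μ := hH.isSymmetric.eigenvalues rfl
  have hμ : ∑ i, μ i = 0 := by
    simpa [htr] using (hH.isSymmetric.re_trace_eq_sum_eigenvalues rfl).symm
  refine ⟨∑ i, Real.exp (μ i), ?_, by
    rw [hH.trace_exp_eq_sum_exp_eigenvalues rfl, Complex.ofReal_sum]⟩
  calc (Module.finrank ℂ E : ℝ) = ∑ i, (μ i + 1) := by simp [Finset.sum_add_distrib, hμ]
    _ ≤ ∑ i, Real.exp (μ i) := Finset.sum_le_sum fun i _ => Real.add_one_le_exp (μ i)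
end

/-- Let `V` be a nonzero finite-dimensional complex inner product space and let
`ρ : su(2) → End(V)` be a real Lie algebra homomorphism with skew-adjoint values;
`ρ` is recorded by the images `X 0, X 1, X 2` of the standard basis
`ĕ₁, ĕ₂, ĕ₃` of `su(2)` (which satisfy `[ĕ₁,ĕ₂] = ĕ₃`, `[ĕ₂,ĕ₃] = ĕ₁`, `[ĕ₃,ĕ₁] = ĕ₂`).
Then the trace of `exp(i·ρ(E))`, with `E = ĕ₁ + ĕ₂ + ĕ₃`, is a real number `≥ 1`. -/
theorem trace_exp_su2_rep_ge_one
    (V : Type*) [NormedAddCommGroup V] [InnerProductSpace ℂ V]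
    [FiniteDimensional ℂ V] [Nontrivial V]
    (X : Fin 3 → V →L[ℂ] V)
    (hbr₁ : X 0 * X 1 - X 1 * X 0 = X 2)
    (hbr₂ : X 1 * X 2 - X 2 * X 1 = X 0)
    (hbr₃ : X 2 * X 0 - X 0 * X 2 = X 1)
    (hskew : ∀ i, ContinuousLinearMap.adjoint (X i) = -(X i)) :
    ∃ r : ℝ, 1 ≤ r ∧
      LinearMap.trace ℂ V
        (NormedSpace.exp (Complex.I • (X 0 + X 1 + X 2)) :
          V →L[ℂ] V).toLinearMap = (r : ℂ) := by
  have hX : ∀ i, X i ∈ skewAdjoint (V →L[ℂ] V) := fun i => by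
    rw [skewAdjoint.mem_iff, ContinuousLinearMap.star_eq_adjoint, hskew]
  have hH : IsSelfAdjoint (Complex.I • (X 0 + X 1 + X 2)) :=
    IsSelfAdjoint.I_smul_of_mem_skewAdjoint (add_mem (add_mem (hX 0) (hX 1)) (hX 2))
  have htr : LinearMap.trace ℂ V (Complex.I • (X 0 + X 1 + X 2) : V →L[ℂ] V) = 0 := by
    simp only [ContinuousLinearMap.toLinearMap_smul, ContinuousLinearMap.toLinearMap_add,
      map_smul, map_add,
      ContinuousLinearMap.trace_eq_zero_of_commutator_eq hbr₁,
      ContinuousLinearMap.trace_eq_zero_of_commutator_eq hbr₂,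
      ContinuousLinearMap.trace_eq_zero_of_commutator_eq hbr₃, add_zero, smul_zero]
  obtain ⟨r, hr, htrexp⟩ := hH.exists_trace_exp_eq_ofReal_ge_finrank htr
  exact ⟨r, le_trans (by exact_mod_cast Module.finrank_pos) hr, htrexp⟩
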